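/- arXiv:math/0410393 — 5 statements merged into one kernel-verified Lean document; each statement's English description precedes it below -/
import Mathlib

section
/- Let O be the local ring at a point P of a reduced curve X, and let Ō = ⊕_i O_i be the semilocal ring of the total normalization at P, with conductor-type exact sequence 0 → O → ⊕_i O_i → T → 0 where T is a torsion module. Then for each i, Hom_O(O_i, O) ≠ 0; consequently K := Hom_O(Ō, O) (the largest Ō-submodule of O) is nonzero. -/
/-- Let `O = O_{X,P}` be the local ring at a point `P` of a reduced curve `X` and
`Ō = ⊕ᵢ Oᵢ` the semilocal ring of the total normalization at `P`, with conductor-type exact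
sequence `0 → O → ⊕ᵢ Oᵢ → T → 0`, `T` torsion (even annihilated by a single nonzerodivisor
`c`, as `T` has finite length).  Each `Oᵢ` is torsion-free and nonzero.  Then for each `i`,
`Hom_O(Oᵢ, O) ≠ 0`; consequently `K = Hom_O(Ō, O)` (the largest `Ō`-submodule of `O`) is
nonzero. -/
theorem hom_to_ring_nonzero (R : Type*) [CommRing R]
    (ι : Type*) [Fintype ι] [DecidableEq ι] [Nonempty ι]
    (O : ι → Type*) [∀ i, AddCommGroup (O i)] [∀ i, Module R (O i)]
    (T : Type*) [AddCommGroup T] [Module R T]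
    (g : R →ₗ[R] (∀ i, O i)) (q : (∀ i, O i) →ₗ[R] T)
    (hg : Function.Injective g) (hq : Function.Surjective q)
    (hexact : ∀ y, q y = 0 ↔ y ∈ LinearMap.range g)
    (c : R) (hc : c ∈ nonZeroDivisors R) (hcT : ∀ t : T, c • t = 0)
    (htf : ∀ i (r : R), r ∈ nonZeroDivisors R → ∀ x : O i, r • x = 0 → x = 0)
    (hnt : ∀ i, ∃ x : O i, x ≠ 0) :
    (∀ i, ∃ f : O i →ₗ[R] R, f ≠ 0) ∧ (∃ F : (∀ i, O i) →ₗ[R] R, F ≠ 0) := by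
  -- For every y in the product, c • y lies in the image of g
  have key : ∀ i (x : O i), ∃ r : R, g r = c • Pi.single i x := by
    intro i x
    have h0 : q (c • Pi.single i x) = 0 := by
      rw [map_smul]; exact hcT _
    obtain ⟨r, hr⟩ := (hexact _).mp h0
    exact ⟨r, hr⟩
  choose φ hφ using key
  -- φ i is additive and R-linear, since g is injective
  have hadd : ∀ i (x y : O i), φ i (x + y) = φ i x + φ i y := by
    intro i x y
    apply hg
    rw [map_add, hφ, hφ, hφ, Pi.single_add, smul_add]
  have hsmul : ∀ i (r : R) (x : O i), φ i (r • x) = r • φ i x := by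
    intro i r x
    apply hg
    rw [map_smul, hφ, hφ, Pi.single_smul, smul_comm]
  have hne : ∀ i (x : O i), x ≠ 0 → φ i x ≠ 0 := by
    intro i x hx h0
    have : c • Pi.single i x = 0 := by rw [← hφ, h0, map_zero]
    have hxi : c • x = 0 := by
      have := congrFun this i
      simpa [Pi.single_eq_same] using this
    exact hx (htf i c hc x hxi)
  -- Define the linear maps
  let f : ∀ i, O i →ₗ[R] R := fun i =>
    { toFun := φ i
      map_add' := hadd i
      map_smul' := hsmul i }
  have hfne : ∀ i, f i ≠ 0 := by
    intro i hf
    obtain ⟨x, hx⟩ := hnt i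
    exact hne i x hx (by simpa [f] using congrArg (fun (F : O i →ₗ[R] R) => F x) hf)
  refine ⟨fun i => ⟨f i, hfne i⟩, ?_⟩
  obtain ⟨i⟩ := ‹Nonempty ι›
  refine ⟨(f i).comp (LinearMap.proj i), ?_⟩
  intro hF
  obtain ⟨x, hx⟩ := hnt i
  have := congrArg (fun (F : (∀ i, O i) →ₗ[R] R) => F (Pi.single i x)) hF
  simp [LinearMap.proj, Pi.single_eq_same] at this
  exact hne i x hx this
end

section
/- Let X = C_1 ∪ ... ∪ C_N be a tree-like curve with a fixed ordering of components as in Teixidor's lemma, H a polarization of degree h, and write d − g = ht + b with 0 ≤ b < h. If L is a stable line bundle on X of degree d, then for every i ≤ N−1 the number k_{X_i} = h_{X_i}(b+1)/h is not an integer, and the degree of L restricted to the subcurve X_i equals d_{X_i} = −χ(O_{X_i}) + h_{X_i}·t + [k_{X_i}] + 1, where [·] denotes the floor function. -/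
/-!
The stability inequalities place the integer `d_{X_i} + χ(O_{X_i}) − h_{X_i} t` in the open
interval `(k_{X_i}, k_{X_i} + 1)`. An open interval of length one contains an integer only when
its left end is not an integer, and that integer is then `⌊k_{X_i}⌋ + 1`.
-/

section OpenUnitInterval

variable {R : Type*} [Ring R] [LinearOrder R] [IsStrictOrderedRing R] [FloorRing R]
  {q : R} {m : ℤ}

theorem Int.floor_eq_sub_one_of_lt_of_lt (hlo : q < m) (hhi : m < q + 1) : ⌊q⌋ = m - 1 := by
  rw [Int.floor_eq_iff, Int.cast_sub, Int.cast_one, sub_add_cancel]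
  exact ⟨(sub_lt_iff_lt_add.mpr hhi).le, hlo⟩

theorem not_exists_intCast_eq_of_lt_of_lt (hlo : q < m) (hhi : m < q + 1) :
    ¬ ∃ z : ℤ, q = z := by
  rintro ⟨z, rfl⟩
  have hzm : z < m := by exact_mod_cast hlo
  have hmz : m < z + 1 := by exact_mod_cast hhi
  omega

end OpenUnitInterval

theorem tree_like_stable_degrees_general (N : ℕ)
    (t : ℤ)
    (hX χX dX : Fin (N - 1) → ℤ)
    (k : Fin (N - 1) → ℚ)
    (hstable : ∀ i, (-(χX i : ℚ) + (hX i : ℚ) * t + k i < (dX i : ℚ)) ∧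
      ((dX i : ℚ) < -(χX i : ℚ) + (hX i : ℚ) * t + k i + 1)) :
    ∀ i, (¬ ∃ z : ℤ, k i = (z : ℚ)) ∧
      (dX i : ℚ) = -(χX i : ℚ) + (hX i : ℚ) * t + (⌊k i⌋ : ℚ) + 1 := by
  intro i
  obtain ⟨hlo, hhi⟩ := hstable i
  set m : ℤ := dX i + χX i - hX i * t with hm
  have hkm : k i < m := by push_cast [hm]; linarith
  have hmk : (m : ℚ) < k i + 1 := by push_cast [hm]; linarith
  refine ⟨not_exists_intCast_eq_of_lt_of_lt hkm hmk, ?_⟩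
  rw [Int.floor_eq_sub_one_of_lt_of_lt hkm hmk, hm]
  push_cast
  ring

/-- Let `X = C₁ ∪ ... ∪ C_N` be a tree-like curve with components ordered per Teixidor's lemma,
with subcurves `X_i` (`i ≤ N−1`) meeting their complements in one node (`α_{X_i} = 1`), `H` a
polarization of degree `h`, and `d − g = ht + b`, `0 ≤ b < h`.  If `L` is a stable line bundle
of degree `d` — so by the general stability criterion, for every `i`,
`−χ(O_{X_i}) + h_{X_i}t + k_{X_i} < d_{X_i} < −χ(O_{X_i}) + h_{X_i}t + k_{X_i} + 1` with
`k_{X_i} = h_{X_i}(b+1)/h` and `d_{X_i} = deg(L|_{X_i}) ∈ ℤ` — then for every `i ≤ N−1`,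
`k_{X_i}` is not an integer and `d_{X_i} = −χ(O_{X_i}) + h_{X_i}t + ⌊k_{X_i}⌋ + 1`. -/
theorem tree_like_stable_degrees (N : ℕ) (h : ℤ) (hp : 0 < h)
    (g d t b : ℤ) (hb0 : 0 ≤ b) (hbh : b < h) (hdg : d - g = h * t + b)
    (hX χX dX : Fin (N - 1) → ℤ)
    (hXpos : ∀ i, 0 < hX i) (hXlt : ∀ i, hX i < h)
    (k : Fin (N - 1) → ℚ) (hk : ∀ i, k i = (hX i : ℚ) * (b + 1) / (h : ℚ))
    (hstable : ∀ i, (-(χX i : ℚ) + (hX i : ℚ) * t + k i < (dX i : ℚ)) ∧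
      ((dX i : ℚ) < -(χX i : ℚ) + (hX i : ℚ) * t + k i + 1)) :
    ∀ i, (¬ ∃ z : ℤ, k i = (z : ℚ)) ∧
      (dX i : ℚ) = -(χX i : ℚ) + (hX i : ℚ) * t + (⌊k i⌋ : ℚ) + 1 :=
  tree_like_stable_degrees_general N t hX χX dX k hstable
end

section
/- Let X = C_1 ∪ ... ∪ C_N be a tree-like curve whose components meet at disconnecting nodes P_1,...,P_{N−1}, with a polarization H of degree h a prime number, and suppose the residue b of d − g modulo h equals h − 1 (i.e. h divides d − g + 1). Then there are no stable (indeed no stable semistable-locally-free) line bundles of degree d on X: for every line bundle L of degree d on X and every proper connected subcurve X_i as in the fixed ordering, k_{X_i} = h_{X_i}(b+1)/h = h_{X_i} is an integer, hence L cannot satisfy the strict stability inequalities. -/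
/-- Let `X = C₁ ∪ ... ∪ C_N` be a tree-like curve (components meeting at disconnecting nodes),
ordered per Teixidor's lemma with subcurves `X_i` meeting their complements in one point, `H` a
polarization of prime degree `h`, and suppose the residue `b` of `d − g` modulo `h` equals
`h − 1` (i.e. `h ∣ d − g + 1`).  Then for every `i`, `k_{X_i} = h_{X_i}(b+1)/h = h_{X_i}` is an
integer, and no line bundle `L` of degree `d` can be stable: for no choice of restricted
degrees `d_{X_i} ∈ ℤ` do the strict stability inequalities
`−χ(O_{X_i}) + h_{X_i}t + k_{X_i} < d_{X_i} < −χ(O_{X_i}) + h_{X_i}t + k_{X_i} + 1` hold. -/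
theorem prime_degree_no_stable_line_bundles (N : ℕ) (hN : 2 ≤ N)
    (h : ℤ) (hp : Prime h)
    (g d t b : ℤ) (hb : b = h - 1) (hdg : d - g = h * t + b)
    (hX χX : Fin (N - 1) → ℤ) (hXpos : ∀ i, 0 < hX i) (hXlt : ∀ i, hX i < h)
    (k : Fin (N - 1) → ℚ) (hk : ∀ i, k i = (hX i : ℚ) * (b + 1) / (h : ℚ)) :
    (∀ i, k i = (hX i : ℚ)) ∧
    (∀ (dX : Fin (N - 1) → ℤ) (i : Fin (N - 1)),
      ¬ ((-(χX i : ℚ) + (hX i : ℚ) * t + k i < (dX i : ℚ)) ∧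
         ((dX i : ℚ) < -(χX i : ℚ) + (hX i : ℚ) * t + k i + 1))) := by
  have hh0 : (h : ℚ) ≠ 0 := Int.cast_ne_zero.mpr hp.ne_zero
  have hk' : ∀ i, k i = (hX i : ℚ) := by
    intro i
    rw [hk i, hb]
    push_cast
    field_simp
    ring
  refine ⟨hk', ?_⟩
  rintro dX i ⟨h1, h2⟩
  rw [hk' i] at h1 h2
  have h1' : -(χX i) + hX i * t + hX i < dX i := by exact_mod_cast h1
  have h2' : (dX i : ℤ) < -(χX i) + hX i * t + hX i + 1 := by exact_mod_cast h2
  omega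
end

section
/- Let X = C_1 ∪ C_2 be a fiber of type III (two smooth rational curves with C_1·C_2 = 2P, arithmetic genus 1) with polarization H of degree h, and write d − 1 = ht + b, 0 ≤ b < h, k_{C_i} = h_{C_i}(b+1)/h. A line bundle L of degree d on X is stable if and only if either (a) k_{C_1} ∈ ℤ and deg(L|_{C_i}) = h_{C_i}t + k_{C_i} for i = 1,2, or (b) k_{C_1} ∉ ℤ and {deg(L|_{C_1}), deg(L|_{C_2})} = {h_{C_1}t + [k_{C_1}], h_{C_2}t + [k_{C_2}] + 1} (in either assignment of components). Moreover strictly semistable line bundles of degree d exist only when k_{C_1} ∈ ℤ, in which case deg(L|_{C_i}) = h_{C_i}t + k_{C_i} − 1 for one i. -/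
/-- Type III fiber `X = C₁ ∪ C₂` (two smooth rational curves with `C₁·C₂ = 2P`, genus 1),
polarization of degree `h = h₁ + h₂`, `d − 1 = ht + b`, `0 ≤ b < h`, `k_i = h_i(b+1)/h`.
By the general criterion, a line bundle `L` of degree `d` with component degrees
`d₁ + d₂ = d` is stable iff `h₁t + k₁ − 1 < d₁ < h₁t + k₁ + 1` strictly (semistable with `≤`).
Then: `L` is stable iff either (a) `k₁ ∈ ℤ` and `d_i = h_i t + k_i` for `i = 1,2`, or
(b) `k₁ ∉ ℤ` and `(d₁,d₂) = (h₁t + ⌊k₁⌋, h₂t + ⌊k₂⌋ + 1)` or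
`(h₁t + ⌊k₁⌋ + 1, h₂t + ⌊k₂⌋)`.  Moreover if `L` is strictly semistable then `k₁ ∈ ℤ` and
`d_i = h_i t + k_i − 1` for one of `i = 1, 2`. -/
theorem type_III_line_bundle_stability (h1 h2 h t b d d1 d2 : ℤ)
    (h1p : 0 < h1) (h2p : 0 < h2) (hh : h = h1 + h2)
    (hb0 : 0 ≤ b) (hbh : b < h) (hd : d - 1 = h * t + b) (hdd : d1 + d2 = d)
    (k1 k2 : ℚ) (hk1 : k1 = (h1 : ℚ) * (b + 1) / h) (hk2 : k2 = (h2 : ℚ) * (b + 1) / h) :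
    ((((h1 : ℚ) * t + k1 - 1 < (d1 : ℚ) ∧ (d1 : ℚ) < (h1 : ℚ) * t + k1 + 1) ↔
      (((∃ z : ℤ, k1 = (z : ℚ)) ∧ (d1 : ℚ) = h1 * t + k1 ∧ (d2 : ℚ) = h2 * t + k2) ∨
       ((¬ ∃ z : ℤ, k1 = (z : ℚ)) ∧
         (((d1 : ℚ) = h1 * t + ⌊k1⌋ ∧ (d2 : ℚ) = h2 * t + ⌊k2⌋ + 1) ∨
          ((d1 : ℚ) = h1 * t + ⌊k1⌋ + 1 ∧ (d2 : ℚ) = h2 * t + ⌊k2⌋)))))) ∧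
    ((((h1 : ℚ) * t + k1 - 1 ≤ (d1 : ℚ) ∧ (d1 : ℚ) ≤ (h1 : ℚ) * t + k1 + 1) ∧
      ¬ ((h1 : ℚ) * t + k1 - 1 < (d1 : ℚ) ∧ (d1 : ℚ) < (h1 : ℚ) * t + k1 + 1)) →
      ((∃ z : ℤ, k1 = (z : ℚ)) ∧
        ((d1 : ℚ) = h1 * t + k1 - 1 ∨ (d2 : ℚ) = h2 * t + k2 - 1))) := by
  have hhp : 0 < h := by omega
  have hQ : (h:ℚ) ≠ 0 := by exact_mod_cast hhp.ne'
  have hsum : k1 + k2 = (b:ℚ) + 1 := by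
    rw [hk1, hk2]
    have : (h:ℚ) = (h1:ℚ) + h2 := by exact_mod_cast hh
    field_simp
    rw [this]
  have hdQ : (d1:ℚ) + d2 = (h1:ℚ)*t + (h2:ℚ)*t + b + 1 := by
    have e1 : d1 + d2 = (h1 + h2) * t + b + 1 := by rw [← hh]; omega
    have e1Q : ((d1:ℚ) + d2) = ((h1:ℚ) + h2) * t + b + 1 := by exact_mod_cast e1
    linarith [e1Q, mul_comm ((h1:ℚ)+h2) (t:ℚ)]
  have hm1 : ((⌊k1⌋:ℚ)) ≤ k1 := Int.floor_le _
  have hm2 : k1 < (⌊k1⌋:ℚ) + 1 := Int.lt_floor_add_one _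
  constructor
  · constructor
    · rintro ⟨hl, hr⟩
      by_cases hint : ∃ z : ℤ, k1 = (z:ℚ)
      · left
        obtain ⟨z, hz⟩ := hint
        have hb1 : ((h1*t + z - 1 : ℤ):ℚ) < (d1:ℚ) := by push_cast; linarith [hz ▸ hl]
        have hb2 : (d1:ℚ) < ((h1*t + z + 1 : ℤ):ℚ) := by push_cast; linarith [hz ▸ hr]
        have hb1' : h1*t + z - 1 < d1 := by exact_mod_cast hb1
        have hb2' : d1 < h1*t + z + 1 := by exact_mod_cast hb2
        have hd1 : d1 = h1*t + z := by omega
        have hd1Q : (d1:ℚ) = (h1:ℚ)*t + k1 := by rw [hz]; exact_mod_cast hd1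
        exact ⟨⟨z, hz⟩, hd1Q, by linarith⟩
      · right
        refine ⟨hint, ?_⟩
        have hne : ((⌊k1⌋:ℚ)) < k1 := by
          rcases lt_or_eq_of_le hm1 with h' | h'
          · exact h'
          · exact absurd ⟨⌊k1⌋, h'.symm⟩ hint
        have hb1 : ((h1*t + ⌊k1⌋ - 1 : ℤ):ℚ) < (d1:ℚ) := by push_cast; linarith
        have hb2 : (d1:ℚ) < ((h1*t + ⌊k1⌋ + 2 : ℤ):ℚ) := by push_cast; linarith
        have hb1' : h1*t + ⌊k1⌋ - 1 < d1 := by exact_mod_cast hb1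
        have hb2' : d1 < h1*t + ⌊k1⌋ + 2 := by exact_mod_cast hb2
        have hfl2 : ⌊k2⌋ = b - ⌊k1⌋ := by
          rw [Int.floor_eq_iff]
          constructor
          · push_cast; linarith
          · push_cast; linarith
        have hd1 : d1 = h1*t + ⌊k1⌋ ∨ d1 = h1*t + ⌊k1⌋ + 1 := by omega
        rcases hd1 with hd1 | hd1
        · left
          have hd1Q : (d1:ℚ) = (h1:ℚ)*t + ⌊k1⌋ := by exact_mod_cast hd1
          refine ⟨hd1Q, ?_⟩
          rw [hfl2]; push_cast; linarith
        · right
          have hd1Q : (d1:ℚ) = (h1:ℚ)*t + ⌊k1⌋ + 1 := by exact_mod_cast hd1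
          refine ⟨hd1Q, ?_⟩
          rw [hfl2]; push_cast; linarith
    · rintro (⟨_, hd1, _⟩ | ⟨hint, (⟨hd1, _⟩ | ⟨hd1, _⟩)⟩)
      · constructor <;> [linarith; linarith]
      · constructor <;> [linarith; linarith]
      · have hne : ((⌊k1⌋:ℚ)) < k1 := by
          rcases lt_or_eq_of_le hm1 with h' | h'
          · exact h'
          · exact absurd ⟨⌊k1⌋, h'.symm⟩ hint
        constructor <;> [linarith; linarith]
  · rintro ⟨⟨hl, hr⟩, hns⟩
    push_neg at hns
    rcases eq_or_lt_of_le hl with heq | hlt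
    · have hz : k1 = ((d1 - h1*t + 1 : ℤ):ℚ) := by push_cast; linarith
      exact ⟨⟨_, hz⟩, Or.inl (by linarith)⟩
    · have heq : (d1:ℚ) = (h1:ℚ)*t + k1 + 1 := le_antisymm hr (hns hlt)
      have hz : k1 = ((d1 - h1*t - 1 : ℤ):ℚ) := by push_cast; linarith
      exact ⟨⟨_, hz⟩, Or.inr (by linarith)⟩
end

section
/- Let X = C_1 ∪ ... ∪ C_N be a curve of type I_N (N ≥ 2, a cycle of rational smooth curves) with polarization H of degree h, d − 1 = ht + b, k_{C_i} = h_{C_i}(b+1)/h. Suppose exactly the indices i_1,...,i_r (r ≥ 2) have k_{C_{i_j}} ∉ ℤ, write k_{C_{i_j}} = [k_{C_{i_j}}] + a_{i_j} with 0 < a_{i_j} < 1, and let ε_{i_j} ∈ {0,1}. Then there exists a stable line bundle of degree d on X with component degrees d_{C_s} = h_{C_s}t + k_{C_s} for s ∉ {i_1,...,i_r} and d_{C_{i_j}} = h_{C_{i_j}}t + [k_{C_{i_j}}] + ε_{i_j}, if and only if for every subset J ⊆ {i_1,...,i_r} such that ∪_{j∈J} C_j together with possibly some components C_s, s ∉ {i_1,...,i_r},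 forms a connected proper subcurve, the inequalities Σ_{j∈J} ε_{i_j} − 1 < Σ_{j∈J} a_{i_j} < Σ_{j∈J} ε_{i_j} + 1 hold. -/
/-- An *arc* of the cycle curve `I_N`: a nonempty proper set of cyclically consecutive
components, i.e. a proper connected subcurve. -/
def IsArc (N : ℕ) [NeZero N] (D : Finset (Fin N)) : Prop :=
  D.Nonempty ∧ D ≠ Finset.univ ∧
    ∃ (a : Fin N) (l : ℕ), D = Finset.image (fun j : Fin l => a + Fin.ofNat N j.val) Finset.univ

/-!
The defect `d_D - (h_D t + k_D)` of a subcurve `D` receives nothing from a component outside `S`,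
where `d_s = h_s t + k_s` exactly, and `ε_i - a_i` from a component `i ∈ S`, since
`⌊k_i⌋ = k_i - a_i`. Hence it equals `Σ_{D ∩ S} ε - Σ_{D ∩ S} a`, and the stability inequality
on an arc `D` is precisely the inequality of the criterion for `J = D ∩ S`.
-/

section Defect

variable {ι R : Type*} [DecidableEq ι] [CommRing R] [LinearOrder R] [FloorRing R]
  {hC ε : ι → ℤ} {t : ℤ} {k dC : ι → R} {S : Finset ι}

theorem sub_mul_add_eq_ite_sub_fract
    (hdC : ∀ i, dC i = if i ∈ S then (hC i : R) * t + (⌊k i⌋ : R) + (ε i : R)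
      else (hC i : R) * t + k i) (i : ι) :
    dC i - ((hC i : R) * t + k i) = if i ∈ S then (ε i : R) - Int.fract (k i) else 0 := by
  rw [hdC i]
  split_ifs
  · rw [Int.fract]
    ring
  · ring

theorem sum_sub_eq_sum_inter_sub_sum_fract
    (hdC : ∀ i, dC i = if i ∈ S then (hC i : R) * t + (⌊k i⌋ : R) + (ε i : R)
      else (hC i : R) * t + k i) (D : Finset ι) :
    ∑ i ∈ D, dC i - ((∑ i ∈ D, (hC i : R)) * t + ∑ i ∈ D, k i)
      = (∑ j ∈ D ∩ S, (ε j : R)) - ∑ j ∈ D ∩ S, Int.fract (k j) := by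
  rw [Finset.sum_mul, ← Finset.sum_add_distrib, ← Finset.sum_sub_distrib,
    Finset.sum_congr rfl fun i _ => sub_mul_add_eq_ite_sub_fract hdC i, Finset.sum_ite_mem,
    Finset.sum_sub_distrib]

theorem sum_bounds_iff_inter_bounds [IsStrictOrderedRing R]
    (hdC : ∀ i, dC i = if i ∈ S then (hC i : R) * t + (⌊k i⌋ : R) + (ε i : R)
      else (hC i : R) * t + k i) (D : Finset ι) :
    ((∑ i ∈ D, (hC i : R)) * t + (∑ i ∈ D, k i) - 1 < ∑ i ∈ D, dC i ∧
        ∑ i ∈ D, dC i < (∑ i ∈ D, (hC i : R)) * t + (∑ i ∈ D, k i) + 1) ↔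
      ((∑ j ∈ D ∩ S, (ε j : R)) - 1 < ∑ j ∈ D ∩ S, Int.fract (k j) ∧
        ∑ j ∈ D ∩ S, Int.fract (k j) < (∑ j ∈ D ∩ S, (ε j : R)) + 1) := by
  have hdefect := sum_sub_eq_sum_inter_sub_sum_fract hdC D
  constructor <;> rintro ⟨hlo, hhi⟩ <;> constructor <;> linarith

end Defect

theorem cycle_stable_line_bundle_criterion_general (N : ℕ) [NeZero N]
    (hC : Fin N → ℤ) (t : ℤ) (k : Fin N → ℚ) (S : Finset (Fin N)) (ε : Fin N → ℤ)
    (dC : Fin N → ℚ)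
    (hdC : ∀ i, dC i = if i ∈ S then (hC i : ℚ) * t + (⌊k i⌋ : ℚ) + (ε i : ℚ)
      else (hC i : ℚ) * t + k i) :
    (∀ D : Finset (Fin N), IsArc N D →
      ((∑ i ∈ D, (hC i : ℚ)) * t + (∑ i ∈ D, k i) - 1 < ∑ i ∈ D, dC i ∧
        ∑ i ∈ D, dC i < (∑ i ∈ D, (hC i : ℚ)) * t + (∑ i ∈ D, k i) + 1)) ↔
    (∀ J ⊆ S, (∃ D : Finset (Fin N), IsArc N D ∧ D ∩ S = J) →
      ((∑ j ∈ J, (ε j : ℚ)) - 1 < ∑ j ∈ J, Int.fract (k j) ∧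
        ∑ j ∈ J, Int.fract (k j) < (∑ j ∈ J, (ε j : ℚ)) + 1)) := by
  constructor
  · rintro hstable J - ⟨D, hD, rfl⟩
    exact (sum_bounds_iff_inter_bounds hdC D).1 (hstable D hD)
  · intro hcrit D hD
    exact (sum_bounds_iff_inter_bounds hdC D).2
      (hcrit (D ∩ S) Finset.inter_subset_right ⟨D, hD, rfl⟩)

/-- Type `I_N` fiber (`N ≥ 2`, a cycle of smooth rational curves), polarization of component
degrees `hC i` with total degree `h`, `d − 1 = ht + b`, `k_i = h_i(b+1)/h`; `S` is the set of
indices with `k_i ∉ ℤ` (assumed of cardinality `r ≥ 2`), `a_i = fract(k_i)`, `ε_i ∈ {0,1}`.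
Consider the line bundle degrees `d_s = h_s t + k_s` for `s ∉ S` and
`d_i = h_i t + ⌊k_i⌋ + ε_i` for `i ∈ S` (via the Picard group description, a stable line
bundle with these degrees exists iff the degree vector satisfies the stability criterion
`h_D t + k_D − 1 < d_D < h_D t + k_D + 1` for every proper connected subcurve, i.e. arc, `D`).
This holds iff for every `J ⊆ S` such that `∪_{j∈J} C_j` together with possibly some
components not in `S` forms a proper connected subcurve (an arc `D` with `D ∩ S = J`), one has
`Σ_{j∈J} ε_j − 1 < Σ_{j∈J} a_j < Σ_{j∈J} ε_j + 1`. -/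
theorem cycle_stable_line_bundle_criterion (N : ℕ) (hN : 2 ≤ N) [NeZero N]
    (hC : Fin N → ℤ) (hCpos : ∀ i, 0 < hC i)
    (h : ℤ) (hh : h = ∑ i, hC i)
    (t b : ℤ) (hb0 : 0 ≤ b) (hbh : b < h)
    (k : Fin N → ℚ) (hk : ∀ i, k i = (hC i : ℚ) * (b + 1) / (h : ℚ))
    (S : Finset (Fin N)) (hS : ∀ i, i ∈ S ↔ ¬ ∃ z : ℤ, k i = (z : ℚ))
    (hScard : 2 ≤ S.card)
    (ε : Fin N → ℤ) (hε : ∀ i ∈ S, ε i = 0 ∨ ε i = 1)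
    (dC : Fin N → ℚ)
    (hdC : ∀ i, dC i = if i ∈ S then (hC i : ℚ) * t + (⌊k i⌋ : ℚ) + (ε i : ℚ)
      else (hC i : ℚ) * t + k i) :
    (∀ D : Finset (Fin N), IsArc N D →
      ((∑ i ∈ D, (hC i : ℚ)) * t + (∑ i ∈ D, k i) - 1 < ∑ i ∈ D, dC i ∧
        ∑ i ∈ D, dC i < (∑ i ∈ D, (hC i : ℚ)) * t + (∑ i ∈ D, k i) + 1)) ↔
    (∀ J ⊆ S, (∃ D : Finset (Fin N), IsArc N D ∧ D ∩ S = J) →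
      ((∑ j ∈ J, (ε j : ℚ)) - 1 < ∑ j ∈ J, Int.fract (k j) ∧
        ∑ j ∈ J, Int.fract (k j) < (∑ j ∈ J, (ε j : ℚ)) + 1)) :=
  cycle_stable_line_bundle_criterion_general N hC t k S ε dC hdC
end
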